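/- Let X be a compact metric space and f : X → 2^X a transitive open set-valued map. Then Ω_final(f) = f(X), and this set is dense in X. -/

import Mathlib

open Metric Set

/-- n-fold relational composition: `fIter f 0 x = {x}`, `fIter f (n+1) x = ⋃ y ∈ fIter f n x, f y`. -/
def fIter {X : Type*} (f : X → Set X) : ℕ → X → Set X
  | 0, x => {x}
  | n + 1, x => ⋃ y ∈ fIter f n x, f y

/-- Image of a set under the n-fold composition. -/
def fIterS {X : Type*} (f : X → Set X) (n : ℕ) (A : Set X) : Set X :=
  ⋃ a ∈ A, fIter f n a

/-- `x ⇝ y`: there is a finite trajectory of length ≥ 1 from `x` to `y`. -/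
def Reach {X : Type*} (f : X → Set X) (x y : X) : Prop :=
  ∃ n, 1 ≤ n ∧ y ∈ fIter f n x

/-- The recurrent set `Ω(f)`. -/
def Omega {X : Type*} (f : X → Set X) : Set X := {x | Reach f x x}

/-- The final recurrent set `Ω_final(f)`. -/
def OmegaFinal {X : Type*} (f : X → Set X) : Set X :=
  {x | ∀ y, Reach f x y → Reach f y x}

/-- `f` is an open set-valued map: open graph and nonempty open connected values. -/
def IsOpenSVM {X : Type*} [TopologicalSpace X] (f : X → Set X) : Prop :=
  IsOpen {p : X × X | p.2 ∈ f p.1} ∧ ∀ x, IsOpen (f x) ∧ IsConnected (f x)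

/-- `f` is transitive. -/
def SVMTransitive {X : Type*} [TopologicalSpace X] (f : X → Set X) : Prop :=
  ∀ A B : Set X, IsOpen A → A.Nonempty → IsOpen B → B.Nonempty →
    ∃ n, 1 ≤ n ∧ (fIterS f n A ∩ B).Nonempty

/-!
The points reachable from a given `y` form an open set (the values of `f` are open) which is
dense by transitivity. If `x ∈ f a`, the open graph gives a neighbourhood `U` of `a` with
`x ∈ f a'` for all `a' ∈ U`; some `a' ∈ U` is reachable from `y`, so every `y` reaches `x`, and
`f(X) ⊆ Ω_final(f)`. Conversely a point `x ∈ Ω_final(f)` is reached back from a point of `f x`,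
so it lies in `f(X)`, which contains the dense set of points reachable from any given point.
-/

section Reach

variable {X : Type*} {f : X → Set X}

lemma mem_fIter_succ {n : ℕ} {x z : X} : z ∈ fIter f (n + 1) x ↔ ∃ y ∈ fIter f n x, z ∈ f y := by
  simp only [fIter, mem_iUnion, exists_prop]

lemma fIter_one (x : X) : fIter f 1 x = f x := by
  simp [fIter]

lemma mem_fIter_add {n m : ℕ} {x y z : X} (hy : y ∈ fIter f n x) (hz : z ∈ fIter f m y) :
    z ∈ fIter f (n + m) x := by
  induction m generalizing z with
  | zero =>
    rw [fIter, mem_singleton_iff] at hz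
    exact hz ▸ hy
  | succ m ih =>
    obtain ⟨w, hw, hzw⟩ := mem_fIter_succ.mp hz
    exact mem_fIter_succ.mpr ⟨w, ih hw, hzw⟩

lemma Reach.of_mem {x y : X} (h : y ∈ f x) : Reach f x y :=
  ⟨1, le_rfl, by rwa [fIter_one]⟩

lemma Reach.trans {x y z : X} (hxy : Reach f x y) (hyz : Reach f y z) : Reach f x z := by
  obtain ⟨n, hn, hy⟩ := hxy
  obtain ⟨m, -, hz⟩ := hyz
  exact ⟨n + m, hn.trans (Nat.le_add_right n m), mem_fIter_add hy hz⟩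

lemma Reach.mem_iUnion {x y : X} (h : Reach f x y) : y ∈ ⋃ w, f w := by
  obtain ⟨n, hn, hy⟩ := h
  obtain ⟨m, rfl⟩ := Nat.exists_eq_add_of_le' hn
  obtain ⟨w, -, hyw⟩ := mem_fIter_succ.mp hy
  exact Set.mem_iUnion.mpr ⟨w, hyw⟩

lemma setOf_reach_eq_iUnion (y : X) : {z | Reach f y z} = ⋃ n : ℕ, fIter f (n + 1) y := by
  ext z
  refine ⟨fun ⟨n, hn, hz⟩ => ?_, fun hz => ?_⟩
  · obtain ⟨m, rfl⟩ := Nat.exists_eq_add_of_le' hn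
    exact mem_iUnion.mpr ⟨m, hz⟩
  · obtain ⟨n, hz⟩ := mem_iUnion.mp hz
    exact ⟨n + 1, Nat.le_add_left 1 n, hz⟩

variable [TopologicalSpace X]

lemma isOpen_setOf_reach (hopen : ∀ x, IsOpen (f x)) (y : X) : IsOpen {z | Reach f y z} := by
  rw [setOf_reach_eq_iUnion]
  exact isOpen_iUnion fun n => isOpen_biUnion fun w _ => hopen w

lemma dense_setOf_reach (hopen : ∀ x, IsOpen (f x)) (htrans : SVMTransitive f) {y : X}
    (hy : (f y).Nonempty) : Dense {z | Reach f y z} := by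
  rw [dense_iff_inter_open]
  intro U hU hUne
  obtain ⟨w, hw⟩ := hy
  obtain ⟨n, hn, z, hzR, hzU⟩ :=
    htrans _ U (isOpen_setOf_reach hopen y) ⟨w, .of_mem hw⟩ hU hUne
  obtain ⟨a, hya, hz⟩ := mem_iUnion₂.mp hzR
  exact ⟨z, hzU, Reach.trans hya ⟨n, hn, hz⟩⟩

lemma reach_of_mem (hf : IsOpenSVM f) (htrans : SVMTransitive f) {a x : X} (hx : x ∈ f a)
    (y : X) : Reach f y x := by
  obtain ⟨U, W, hU, -, haU, hxW, hUW⟩ := isOpen_prod_iff.mp hf.1 a x hx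
  obtain ⟨a', ha'U, hya'⟩ :=
    (dense_setOf_reach (fun z => (hf.2 z).1) htrans (hf.2 y).2.nonempty).inter_open_nonempty
      U hU ⟨a, haU⟩
  exact hya'.trans (.of_mem (hUW (mk_mem_prod ha'U hxW)))

end Reach

theorem stmt_9_general {X : Type*} [MetricSpace X] (f : X → Set X)
    (hf : IsOpenSVM f) (htrans : SVMTransitive f) :
    OmegaFinal f = (⋃ x : X, f x) ∧ Dense (OmegaFinal f) := by
  have hopen : ∀ x, IsOpen (f x) := fun x => (hf.2 x).1
  have heq : OmegaFinal f = ⋃ x : X, f x := by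
    refine Subset.antisymm (fun x hx => ?_) (iUnion_subset fun a _ hx => ?_)
    · obtain ⟨y, hy⟩ := (hf.2 x).2.nonempty
      exact (hx y (.of_mem hy)).mem_iUnion
    · exact fun y _ => reach_of_mem hf htrans hx y
  refine ⟨heq, ?_⟩
  rw [heq, dense_iff_inter_open]
  rintro U hU ⟨u, hu⟩
  obtain ⟨z, hzU, huz⟩ :=
    (dense_setOf_reach hopen htrans (hf.2 u).2.nonempty).inter_open_nonempty U hU ⟨u, hu⟩
  exact ⟨z, hzU, Reach.mem_iUnion huz⟩

theorem stmt_9 {X : Type*} [MetricSpace X] [CompactSpace X] (f : X → Set X)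
    (hf : IsOpenSVM f) (htrans : SVMTransitive f) :
    OmegaFinal f = (⋃ x : X, f x) ∧ Dense (OmegaFinal f) :=
  stmt_9_general f hf htrans
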